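/- arXiv:1305.6235 — 3 statements merged into one kernel-verified Lean document; each statement's English description precedes it below -/
import Mathlib

section
/- Let B and Y be Banach spaces and M₊ a seminormed nonnegative cone in B that embeds compactly into B. Assume that whenever a sequence (wₙ) in B satisfies wₙ → w in B and wₙ → 0 in Y, then w = 0. Then for every ε > 0 there exists C_ε > 0 such that for all u, v ∈ M₊ ∩ Y, ‖u − v‖_B ≤ ε([u] + [v]) + C_ε‖u − v‖_Y. -/
/-!
Argue by contradiction on a normalised version of the inequality: if it fails for pairs with
`[u], [v] ≤ 1` and every constant `C = n + 1`, compactness of the cone gives a subsequence along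
which `uₙ → z₁` and `vₙ → z₂` in `B`, while `‖uₙ - vₙ‖_Y ≤ ‖uₙ - vₙ‖_B / (n + 1) → 0`. The
compatibility of the two topologies forces `z₁ = z₂`, contradicting `‖uₙ - vₙ‖_B > ε`. The general
inequality follows by scaling `u` and `v` by `([u] + [v])⁻¹`.
-/

open Filter Topology

def IsCompactEmbedding {B : Type*} [TopologicalSpace B] (M : Set B) (cn : B → ℝ) : Prop :=
  ∀ w : ℕ → B, (∀ n, w n ∈ M) → (∃ C : ℝ, ∀ n, cn (w n) ≤ C) →
    ∃ φ : ℕ → ℕ, StrictMono φ ∧ ∃ z : B, Tendsto (fun n => w (φ n)) atTop (𝓝 z)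

theorem IsCompactEmbedding.exists_strictMono_tendsto_pair {B : Type*} [TopologicalSpace B]
    {M : Set B} {cn : B → ℝ} (hM : IsCompactEmbedding M cn) {a b : ℕ → B} {C : ℝ}
    (ha : ∀ n, a n ∈ M) (hb : ∀ n, b n ∈ M) (haC : ∀ n, cn (a n) ≤ C) (hbC : ∀ n, cn (b n) ≤ C) :
    ∃ ψ : ℕ → ℕ, StrictMono ψ ∧ ∃ z₁ z₂ : B,
      Tendsto (fun n => a (ψ n)) atTop (𝓝 z₁) ∧ Tendsto (fun n => b (ψ n)) atTop (𝓝 z₂) := by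
  obtain ⟨φ₁, hφ₁, z₁, hz₁⟩ := hM a ha ⟨C, haC⟩
  obtain ⟨φ₂, hφ₂, z₂, hz₂⟩ := hM (fun n => b (φ₁ n)) (fun n => hb _) ⟨C, fun n => hbC _⟩
  exact ⟨φ₁ ∘ φ₂, hφ₁.comp hφ₂, z₁, z₂, hz₁.comp hφ₂.tendsto_atTop, hz₂⟩

theorem tendsto_zero_of_mul_norm_le {Y : Type*} [SeminormedAddCommGroup Y] {y : ℕ → Y} {K : ℝ}
    (hy : ∀ n : ℕ, ((n : ℝ) + 1) * ‖y n‖ ≤ K) : Tendsto y atTop (𝓝 0) := by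
  rw [tendsto_zero_iff_norm_tendsto_zero]
  refine squeeze_zero (fun n => norm_nonneg _)
    (fun n => (le_div_iff₀' n.cast_add_one_pos).2 (hy n)) ?_
  simpa [Function.comp_def] using
    (tendsto_const_div_atTop_nhds_zero_nat K).comp (tendsto_add_atTop_nat 1)

theorem exists_norm_sub_le_of_cn_le_one {B Y : Type*} [NormedAddCommGroup B]
    [NormedSpace ℝ B] [NormedAddCommGroup Y] [NormedSpace ℝ Y] {M : Set B} {cn : B → ℝ}
    {V : Submodule ℝ B} {j : V →ₗ[ℝ] Y} (hM : IsCompactEmbedding M cn)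
    (hii : ∀ (w : ℕ → V) (wl : B), Tendsto (fun n => (w n : B)) atTop (𝓝 wl) →
      Tendsto (fun n => j (w n)) atTop (𝓝 (0 : Y)) → wl = 0)
    {ε : ℝ} (hε : 0 < ε) :
    ∃ C > (0 : ℝ), ∀ (u v : B) (hu : u ∈ V) (hv : v ∈ V), u ∈ M → v ∈ M →
      cn u ≤ 1 → cn v ≤ 1 → ‖u - v‖ ≤ ε + C * ‖j ⟨u, hu⟩ - j ⟨v, hv⟩‖ := by
  by_contra! h
  choose u v hu hv huM hvM hu1 hv1 hlt using fun n : ℕ => h ((n : ℝ) + 1) n.cast_add_one_pos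
  obtain ⟨ψ, hψ, z₁, z₂, hz₁, hz₂⟩ := hM.exists_strictMono_tendsto_pair huM hvM hu1 hv1
  let w : ℕ → V := fun n => ⟨u (ψ n), hu _⟩ - ⟨v (ψ n), hv _⟩
  have hw : Tendsto (fun n => (w n : B)) atTop (𝓝 (z₁ - z₂)) := hz₁.sub hz₂
  have hw_gt : ∀ n, ε + ((ψ n : ℝ) + 1) * ‖j (w n)‖ < ‖(w n : B)‖ := fun n => by
    simpa [w] using hlt (ψ n)
  obtain ⟨K, hK⟩ := hw.norm.bddAbove_range
  have hjw : Tendsto (fun n => j (w n)) atTop (𝓝 0) := by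
    refine tendsto_zero_of_mul_norm_le (K := K) fun n => ?_
    have hn : (n : ℝ) ≤ ψ n := by exact_mod_cast hψ.le_apply
    calc ((n : ℝ) + 1) * ‖j (w n)‖ ≤ ((ψ n : ℝ) + 1) * ‖j (w n)‖ := by gcongr
      _ ≤ ‖(w n : B)‖ := by linarith [hw_gt n]
      _ ≤ K := hK ⟨n, rfl⟩
  have hε_le : ε ≤ ‖z₁ - z₂‖ :=
    ge_of_tendsto' hw.norm fun n => ((le_add_of_nonneg_right (by positivity)).trans_lt (hw_gt n)).le
  rw [hii w _ hw hjw, norm_zero] at hε_le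
  linarith

theorem stmt0_general
    {B Y : Type*} [NormedAddCommGroup B] [NormedSpace ℝ B]
    [NormedAddCommGroup Y] [NormedSpace ℝ Y]
    (M : Set B) (cn : B → ℝ)
    (hMcone : ∀ u ∈ M, ∀ c : ℝ, 0 ≤ c → c • u ∈ M)
    (hcn_nonneg : ∀ u ∈ M, 0 ≤ cn u)
    (hcn_zero : ∀ u ∈ M, (cn u = 0 ↔ u = 0))
    (hcn_smul : ∀ u ∈ M, ∀ c : ℝ, 0 ≤ c → cn (c • u) = c * cn u)
    -- M ↪ B compactly: every cn-bounded sequence in M has a convergent subsequence in B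
    (hcompact : ∀ w : ℕ → B, (∀ n, w n ∈ M) → (∃ C : ℝ, ∀ n, cn (w n) ≤ C) →
      ∃ φ : ℕ → ℕ, StrictMono φ ∧ ∃ z : B,
        Tendsto (fun n => w (φ n)) atTop (𝓝 z))
    (V : Submodule ℝ B) (j : V →ₗ[ℝ] Y)
    -- condition (ii): wₙ → w in B and wₙ → 0 in Y imply w = 0
    (hii : ∀ (w : ℕ → V) (wl : B),
      Tendsto (fun n => (w n : B)) atTop (𝓝 wl) →
      Tendsto (fun n => j (w n)) atTop (𝓝 (0 : Y)) → wl = 0) :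
    ∀ ε > (0:ℝ), ∃ C > (0:ℝ), ∀ (u v : B) (hu : u ∈ V) (hv : v ∈ V),
      u ∈ M → v ∈ M →
      ‖u - v‖ ≤ ε * (cn u + cn v) + C * ‖j ⟨u, hu⟩ - j ⟨v, hv⟩‖ := by
  intro ε hε
  obtain ⟨C, hC, hbound⟩ := exists_norm_sub_le_of_cn_le_one hcompact hii hε
  refine ⟨C, hC, fun u v hu hv huM hvM => ?_⟩
  have hu₀ := hcn_nonneg u huM
  have hv₀ := hcn_nonneg v hvM
  obtain hs | hs := (add_nonneg hu₀ hv₀).eq_or_lt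
  · obtain rfl := (hcn_zero u huM).1 (by linarith)
    obtain rfl := (hcn_zero v hvM).1 (by linarith)
    simp [← hs]
  set s := cn u + cn v
  have hs_inv : 0 ≤ s⁻¹ := inv_nonneg.2 hs.le
  have hcn_le : ∀ x ∈ M, cn x ≤ s → cn (s⁻¹ • x) ≤ 1 := fun x hx hxs => by
    rwa [hcn_smul x hx _ hs_inv, inv_mul_le_iff₀ hs, mul_one]
  have key := hbound (s⁻¹ • u) (s⁻¹ • v) (V.smul_mem _ hu) (V.smul_mem _ hv)
    (hMcone u huM _ hs_inv) (hMcone v hvM _ hs_inv)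
    (hcn_le u huM (by linarith)) (hcn_le v hvM (by linarith))
  have hj : j ⟨s⁻¹ • u, V.smul_mem _ hu⟩ - j ⟨s⁻¹ • v, V.smul_mem _ hv⟩ =
      s⁻¹ • (j ⟨u, hu⟩ - j ⟨v, hv⟩) := by
    rw [smul_sub, ← map_smul, ← map_smul]
    rfl
  rw [hj, ← smul_sub, norm_smul, norm_smul, Real.norm_of_nonneg hs_inv] at key
  calc ‖u - v‖ = s * (s⁻¹ * ‖u - v‖) := by field_simp
    _ ≤ s * (ε + C * (s⁻¹ * ‖j ⟨u, hu⟩ - j ⟨v, hv⟩‖)) := by gcongr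
    _ = ε * s + C * ‖j ⟨u, hu⟩ - j ⟨v, hv⟩‖ := by field_simp

/-- Ehrling-type inequality for a seminormed nonnegative cone `M` in a Banach
space `B`.  The intersection with the Banach space `Y` is modelled by a
submodule `V` of `B` together with a linear map `j : V →ₗ[ℝ] Y` giving the
`Y`-realization of elements of `B ∩ Y`. -/
theorem stmt0
    {B Y : Type*} [NormedAddCommGroup B] [NormedSpace ℝ B] [CompleteSpace B]
    [NormedAddCommGroup Y] [NormedSpace ℝ Y] [CompleteSpace Y]
    (M : Set B) (cn : B → ℝ)
    (hMcone : ∀ u ∈ M, ∀ c : ℝ, 0 ≤ c → c • u ∈ M)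
    (hcn_nonneg : ∀ u ∈ M, 0 ≤ cn u)
    (hcn_zero : ∀ u ∈ M, (cn u = 0 ↔ u = 0))
    (hcn_smul : ∀ u ∈ M, ∀ c : ℝ, 0 ≤ c → cn (c • u) = c * cn u)
    -- M ↪ B compactly: every cn-bounded sequence in M has a convergent subsequence in B
    (hcompact : ∀ w : ℕ → B, (∀ n, w n ∈ M) → (∃ C : ℝ, ∀ n, cn (w n) ≤ C) →
      ∃ φ : ℕ → ℕ, StrictMono φ ∧ ∃ z : B,
        Tendsto (fun n => w (φ n)) atTop (𝓝 z))
    (V : Submodule ℝ B) (j : V →ₗ[ℝ] Y)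
    -- condition (ii): wₙ → w in B and wₙ → 0 in Y imply w = 0
    (hii : ∀ (w : ℕ → V) (wl : B),
      Tendsto (fun n => (w n : B)) atTop (𝓝 wl) →
      Tendsto (fun n => j (w n)) atTop (𝓝 (0 : Y)) → wl = 0) :
    ∀ ε > (0:ℝ), ∃ C > (0:ℝ), ∀ (u v : B) (hu : u ∈ V) (hv : v ∈ V),
      u ∈ M → v ∈ M →
      ‖u - v‖ ≤ ε * (cn u + cn v) + C * ‖j ⟨u, hu⟩ - j ⟨v, hv⟩‖ :=
  stmt0_general M cn hMcone hcn_nonneg hcn_zero hcn_smul hcompact V j hii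
end

section
/- Let B be a Banach space, 1 ≤ p < ∞, T = Nτ with τ > 0, and let u_τ : (0,T) → B be constant on each subinterval ((k−1)τ, kτ], say u_τ(t) = u_k there, for 1 ≤ k ≤ N. Then for every 0 < h < T, ‖σ_h u_τ − u_τ‖_{L^p(0,T−h;B)} ≤ h^{1/p} · Σ_{k=1}^{N−1} ‖u_{k+1} − u_k‖_B, where (σ_h u)(t) = u(t+h). -/
/-!
The step containing `t` has index `⌈t / τ⌉₊`. Between `t` and `t + h` the function `u_τ`
crosses exactly the jump points `kτ` with `t ≤ kτ < t + h`, so by telescoping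
`u_τ(t + h) - u_τ(t) = ∑ₖ 1_{(kτ - h, kτ]}(t) (u_{k+1} - u_k)`. Each indicator is supported
on an interval of length `h`, hence has `Lᵖ` norm at most `h^{1/p}`, and Minkowski's
inequality sums these bounds.
-/

open MeasureTheory Set
open scoped ENNReal

section PiecewiseConstant

variable {B : Type*} {N : ℕ} {τ : ℝ} {u : ℕ → B} {f : ℝ → B}

theorem mem_Ioc_sub_iff_mem_Ico_natCeil (hτ : 0 < τ) (t h : ℝ) (k : ℕ) :
    t ∈ Ioc (k * τ - h) (k * τ) ↔ k ∈ Finset.Ico ⌈t / τ⌉₊ ⌈(t + h) / τ⌉₊ := by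
  rw [Finset.mem_Ico, Nat.ceil_le, Nat.lt_ceil, div_le_iff₀ hτ, lt_div_iff₀ hτ, mem_Ioc,
    sub_lt_iff_lt_add, and_comm]

theorem apply_eq_apply_natCeil_div (hτ : 0 < τ)
    (hf : ∀ k ∈ Finset.Icc 1 N, ∀ t ∈ Ioc ((k - 1 : ℝ) * τ) (k * τ), f t = u k)
    {t : ℝ} (ht : 0 < t) (htN : t ≤ N * τ) : f t = u ⌈t / τ⌉₊ := by
  refine hf _ (Finset.mem_Icc.2 ⟨Nat.one_le_ceil_iff.2 (div_pos ht hτ), ?_⟩) t ⟨?_, ?_⟩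
  · exact Nat.ceil_le.2 ((div_le_iff₀ hτ).2 htN)
  · exact (lt_div_iff₀ hτ).1 (sub_lt_iff_lt_add.2 (Nat.ceil_lt_add_one (div_pos ht hτ).le))
  · exact (div_le_iff₀ hτ).1 (Nat.le_ceil _)

variable [AddCommGroup B]

theorem sub_eq_sum_indicator_jumps (hτ : 0 < τ)
    (hf : ∀ k ∈ Finset.Icc 1 N, ∀ t ∈ Ioc ((k - 1 : ℝ) * τ) (k * τ), f t = u k)
    {t h : ℝ} (ht : 0 < t) (hh : 0 ≤ h) (hthN : t + h ≤ N * τ) :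
    f (t + h) - f t = ∑ k ∈ Finset.Icc 1 (N - 1),
      (Ioc (k * τ - h) (k * τ)).indicator (fun _ => u (k + 1) - u k) t := by
  set j := ⌈t / τ⌉₊
  set j' := ⌈(t + h) / τ⌉₊
  have hj : 1 ≤ j := Nat.one_le_ceil_iff.2 (div_pos ht hτ)
  have hj' : j' ≤ N := Nat.ceil_le.2 ((div_le_iff₀ hτ).2 hthN)
  have hjj' : j ≤ j' := Nat.ceil_le_ceil (by gcongr; linarith)
  have hjumps : (Finset.Icc 1 (N - 1)).filter (· ∈ Finset.Ico j j') = Finset.Ico j j' := by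
    ext k
    simp only [Finset.mem_filter, Finset.mem_Icc, Finset.mem_Ico]
    omega
  simp_rw [indicator_apply, mem_Ioc_sub_iff_mem_Ico_natCeil hτ]
  rw [← Finset.sum_filter, hjumps, Finset.sum_Ico_sub _ hjj',
    apply_eq_apply_natCeil_div hτ hf (by linarith) hthN,
    apply_eq_apply_natCeil_div hτ hf ht (by linarith)]

end PiecewiseConstant

theorem eLpNorm_sum_indicator_const_le {α E ι : Type*} [MeasurableSpace α]
    {μ : Measure α} [NormedAddCommGroup E] (s : Finset ι) {S : ι → Set α}
    (hS : ∀ i ∈ s, MeasurableSet (S i)) (c : ι → E) {p : ℝ≥0∞} (hp : 1 ≤ p)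
    {m : ℝ≥0∞} (hμ : ∀ i ∈ s, μ (S i) ≤ m) :
    eLpNorm (∑ i ∈ s, (S i).indicator fun _ => c i) p μ ≤
      m ^ (1 / p.toReal) * ∑ i ∈ s, ‖c i‖ₑ := by
  calc eLpNorm (∑ i ∈ s, (S i).indicator fun _ => c i) p μ
      ≤ ∑ i ∈ s, eLpNorm ((S i).indicator fun _ => c i) p μ :=
        eLpNorm_sum_le (fun i hi => aestronglyMeasurable_const.indicator (hS i hi)) hp
    _ ≤ ∑ i ∈ s, ‖c i‖ₑ * m ^ (1 / p.toReal) :=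
        Finset.sum_le_sum fun i hi =>
          (eLpNorm_indicator_const_le _ _).trans (by gcongr; exact hμ i hi)
    _ = m ^ (1 / p.toReal) * ∑ i ∈ s, ‖c i‖ₑ := by rw [Finset.mul_sum]; simp_rw [mul_comm]

theorem stmt1_general
    {B : Type*} [NormedAddCommGroup B]
    (p : ℝ) (hp : 1 ≤ p)
    (N : ℕ) (τ T : ℝ) (hτ : 0 < τ) (hT : T = N * τ)
    (u : ℕ → B) (f : ℝ → B)
    (hf : ∀ k ∈ Finset.Icc 1 N, ∀ t ∈ Ioc ((k - 1 : ℝ) * τ) (k * τ), f t = u k)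
    (h : ℝ) (hh0 : 0 < h) :
    eLpNorm (fun t => f (t + h) - f t) (ENNReal.ofReal p)
        (volume.restrict (Ioc 0 (T - h)))
      ≤ ENNReal.ofReal
          (h ^ (1 / p) * ∑ k ∈ Finset.Icc 1 (N - 1), ‖u (k + 1) - u k‖) := by
  subst hT
  have hjumps : (fun t => f (t + h) - f t) =ᵐ[volume.restrict (Ioc 0 (N * τ - h))]
      ∑ k ∈ Finset.Icc 1 (N - 1),
        (Ioc (k * τ - h) (k * τ)).indicator fun _ => u (k + 1) - u k := by
    refine (ae_restrict_iff' measurableSet_Ioc).2 (ae_of_all _ fun t ⟨ht, htT⟩ => ?_)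
    rw [Finset.sum_apply]
    exact sub_eq_sum_indicator_jumps hτ hf ht hh0.le (by linarith)
  have hlength (k : ℕ) :
      volume.restrict (Ioc 0 (N * τ - h)) (Ioc (k * τ - h) (k * τ)) ≤ ENNReal.ofReal h :=
    (Measure.restrict_apply_le _ _).trans (by simp)
  rw [eLpNorm_congr_ae hjumps, ENNReal.ofReal_mul (by positivity),
    ← ENNReal.ofReal_rpow_of_nonneg hh0.le (by positivity),
    ENNReal.ofReal_sum_of_nonneg fun _ _ => norm_nonneg _]
  simp_rw [ofReal_norm]
  convert eLpNorm_sum_indicator_const_le _ (fun _ _ => measurableSet_Ioc) _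
    (ENNReal.one_le_ofReal.2 hp) fun k _ => hlength k using 3
  rw [ENNReal.toReal_ofReal (by linarith)]

/-- Time-shift estimate in `L^p(0,T-h;B)` for a piecewise constant function
`f` with `f(t) = u k` on `((k-1)τ, kτ]`, `1 ≤ k ≤ N`, `T = Nτ`. -/
theorem stmt1
    {B : Type*} [NormedAddCommGroup B] [NormedSpace ℝ B] [CompleteSpace B]
    (p : ℝ) (hp : 1 ≤ p)
    (N : ℕ) (hN : 1 ≤ N) (τ T : ℝ) (hτ : 0 < τ) (hT : T = N * τ)
    (u : ℕ → B) (f : ℝ → B)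
    (hf : ∀ k ∈ Finset.Icc 1 N, ∀ t ∈ Ioc ((k - 1 : ℝ) * τ) (k * τ), f t = u k)
    (h : ℝ) (hh0 : 0 < h) (hhT : h < T) :
    eLpNorm (fun t => f (t + h) - f t) (ENNReal.ofReal p)
        (volume.restrict (Ioc 0 (T - h)))
      ≤ ENNReal.ofReal
          (h ^ (1 / p) * ∑ k ∈ Finset.Icc 1 (N - 1), ‖u (k + 1) - u k‖) :=
  stmt1_general p hp N τ T hτ hT u f hf h hh0
end

section
/- Let B be a Banach space, T = Nτ with τ > 0, let u_τ be piecewise constant with values u_k on ((k−1)τ, kτ], and let ũ_τ be the linear interpolation defined by ũ_τ(t) = u_1 for 0 < t ≤ τ and ũ_τ(t) = u_k − (kτ − t)(u_k − u_{k−1})/τ for (k−1)τ < t ≤ kτ, 2 ≤ k ≤ N. Then ‖ũ_τ − u_τ‖_{L^1(0,T;B)} ≤ ‖σ_τ u_τ − u_τ‖_{L^1(0,T−τ;B)}. -/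
/-!
On `(0, τ]` the interpolant coincides with the step function. On the `k`-th cell with `k ≥ 2`,
`g t - f t = -c • (u k - u (k - 1))` with `c ∈ [0, 1]`, and `u k - u (k - 1) = f t - f (t - τ)`,
so `‖g - f‖` is bounded pointwise on `(τ, T]` by `‖f - f (· - τ)‖`, whose integral over `(τ, T]`
is the right-hand side after the shift `t ↦ t + τ`.
-/

open MeasureTheory Set

theorem mem_Ioc_natCeil_div_mul {τ t : ℝ} (hτ : 0 < τ) (ht : 0 ≤ t) :
    t ∈ Ioc ((⌈t / τ⌉₊ - 1 : ℝ) * τ) (⌈t / τ⌉₊ * τ) := by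
  have hlt : (⌈t / τ⌉₊ : ℝ) < t / τ + 1 := Nat.ceil_lt_add_one (div_nonneg ht hτ.le)
  have hle : t / τ ≤ ⌈t / τ⌉₊ := Nat.le_ceil _
  constructor
  · rw [← lt_div_iff₀ hτ]; linarith
  · rwa [← div_le_iff₀ hτ]

theorem Ioc_mul_subset_biUnion_Ioc {τ : ℝ} (hτ : 0 < τ) (n m : ℕ) :
    Ioc (n * τ) (m * τ) ⊆ ⋃ k ∈ Finset.Icc (n + 1) m, Ioc ((k - 1 : ℝ) * τ) (k * τ) := by
  rintro t ⟨hnt, htm⟩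
  have ht : 0 ≤ t := (by positivity : (0 : ℝ) ≤ n * τ).trans hnt.le
  refine mem_iUnion₂.2 ⟨⌈t / τ⌉₊, Finset.mem_Icc.2 ⟨?_, ?_⟩, mem_Ioc_natCeil_div_mul hτ ht⟩
  · exact Nat.lt_ceil.2 ((lt_div_iff₀ hτ).2 hnt)
  · exact Nat.ceil_le.2 ((div_le_iff₀ hτ).2 htm)

theorem sub_mem_Ioc_pred_mul {τ t : ℝ} {k : ℕ} (hk : 1 ≤ k)
    (ht : t ∈ Ioc ((k - 1 : ℝ) * τ) (k * τ)) :
    t - τ ∈ Ioc (((k - 1 : ℕ) - 1 : ℝ) * τ) ((k - 1 : ℕ) * τ) := by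
  rw [Nat.cast_sub hk, Nat.cast_one]
  constructor <;> linarith [ht.1, ht.2]

theorem setIntegral_Ioc_comp_add_right {E : Type*} [NormedAddCommGroup E] [NormedSpace ℝ E]
    (F : ℝ → E) (a b d : ℝ) :
    ∫ t in Ioc a b, F (t + d) = ∫ t in Ioc (a + d) (b + d), F t := by
  rcases le_total a b with hab | hba
  · rw [← intervalIntegral.integral_of_le hab, ← intervalIntegral.integral_of_le (by linarith),
      intervalIntegral.integral_comp_add_right]
  · rw [Ioc_eq_empty_of_le hba, Ioc_eq_empty_of_le (by linarith), Measure.restrict_empty,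
      integral_zero_measure, integral_zero_measure]

theorem norm_sub_smul_sub_sub_self_le {E : Type*} [SeminormedAddCommGroup E] [NormedSpace ℝ E]
    {a b : E} {c : ℝ} (hc : c ∈ Icc 0 1) : ‖a - c • (a - b) - a‖ ≤ ‖a - b‖ := by
  rw [sub_sub_cancel_left, norm_neg, norm_smul, Real.norm_of_nonneg hc.1]
  exact mul_le_of_le_one_left (norm_nonneg _) hc.2

section Rothe

variable {B : Type*} {N : ℕ} {τ : ℝ} {u : ℕ → B} {f : ℝ → B}

theorem step_apply_sub_eq
    (hf : ∀ k ∈ Finset.Icc 1 N, ∀ t ∈ Ioc ((k - 1 : ℝ) * τ) (k * τ), f t = u k)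
    {k : ℕ} (hk : k ∈ Finset.Icc 2 N) {t : ℝ} (ht : t ∈ Ioc ((k - 1 : ℝ) * τ) (k * τ)) :
    f (t - τ) = u (k - 1) := by
  have hk' := Finset.mem_Icc.1 hk
  exact hf (k - 1) (Finset.mem_Icc.2 ⟨by omega, by omega⟩) _ (sub_mem_Ioc_pred_mul (by omega) ht)

variable [NormedAddCommGroup B]

theorem integrableOn_norm_step_sub_shift (hτ : 0 < τ)
    (hf : ∀ k ∈ Finset.Icc 1 N, ∀ t ∈ Ioc ((k - 1 : ℝ) * τ) (k * τ), f t = u k) :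
    IntegrableOn (fun t => ‖f t - f (t - τ)‖) (Ioc τ (N * τ)) := by
  refine IntegrableOn.mono_set ?_
    fun t ht => Ioc_mul_subset_biUnion_Ioc hτ 1 N (by rwa [Nat.cast_one, one_mul])
  refine integrableOn_finset_iUnion.2 fun k hk => ?_
  refine (integrableOn_const (C := ‖u k - u (k - 1)‖) measure_Ioc_lt_top.ne).congr_fun
    (fun t ht => ?_) measurableSet_Ioc
  have hk1 : k ∈ Finset.Icc 1 N := Finset.Icc_subset_Icc_left one_le_two hk
  rw [hf k hk1 t ht, step_apply_sub_eq hf hk ht]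

theorem norm_rothe_sub_step_le [NormedSpace ℝ B] {g : ℝ → B} (hτ : 0 < τ)
    (hf : ∀ k ∈ Finset.Icc 1 N, ∀ t ∈ Ioc ((k - 1 : ℝ) * τ) (k * τ), f t = u k)
    (hgk : ∀ k ∈ Finset.Icc 2 N, ∀ t ∈ Ioc ((k - 1 : ℝ) * τ) (k * τ),
      g t = u k - ((k * τ - t) / τ) • (u k - u (k - 1)))
    {t : ℝ} (ht : t ∈ Ioc τ (N * τ)) : ‖g t - f t‖ ≤ ‖f t - f (t - τ)‖ := by
  obtain ⟨k, hk, htk⟩ :=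
    mem_iUnion₂.1 (Ioc_mul_subset_biUnion_Ioc hτ 1 N (by rwa [Nat.cast_one, one_mul]))
  have hk1 : k ∈ Finset.Icc 1 N := Finset.Icc_subset_Icc_left one_le_two hk
  rw [hgk k hk t htk, hf k hk1 t htk, step_apply_sub_eq hf hk htk]
  refine norm_sub_smul_sub_sub_self_le ⟨div_nonneg (by linarith [htk.2]) hτ.le, ?_⟩
  rw [div_le_one hτ]
  linarith [htk.1]

end Rothe

theorem stmt9_general
    {B : Type*} [NormedAddCommGroup B] [NormedSpace ℝ B]
    (N : ℕ) (hN : 1 ≤ N) (τ T : ℝ) (hτ : 0 < τ) (hT : T = N * τ)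
    (u : ℕ → B) (f g : ℝ → B)
    (hf : ∀ k ∈ Finset.Icc 1 N, ∀ t ∈ Ioc ((k - 1 : ℝ) * τ) (k * τ), f t = u k)
    (hg1 : ∀ t ∈ Ioc (0 : ℝ) τ, g t = u 1)
    (hgk : ∀ k ∈ Finset.Icc 2 N, ∀ t ∈ Ioc ((k - 1 : ℝ) * τ) (k * τ),
      g t = u k - ((k * τ - t) / τ) • (u k - u (k - 1))) :
    ∫ t in Ioc 0 T, ‖g t - f t‖ ≤ ∫ t in Ioc 0 (T - τ), ‖f (t + τ) - f t‖ := by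
  subst hT
  calc ∫ t in Ioc 0 (N * τ), ‖g t - f t‖ = ∫ t in Ioc τ (N * τ), ‖g t - f t‖ := by
        refine setIntegral_eq_of_subset_of_forall_sdiff_eq_zero measurableSet_Ioc
          (Ioc_subset_Ioc_left hτ.le) ?_
        rintro t ⟨⟨ht0, htN⟩, htτ⟩
        have ht : t ∈ Ioc 0 τ := ⟨ht0, not_lt.1 fun h => htτ ⟨h, htN⟩⟩
        rw [hg1 t ht, hf 1 (Finset.mem_Icc.2 ⟨le_rfl, hN⟩) t (by simpa using ht), sub_self,
          norm_zero]
    _ ≤ ∫ t in Ioc τ (N * τ), ‖f t - f (t - τ)‖ :=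
        integral_mono_of_nonneg (Filter.Eventually.of_forall fun _ => norm_nonneg _)
          (integrableOn_norm_step_sub_shift hτ hf)
          (ae_restrict_of_forall_mem measurableSet_Ioc fun _ ht =>
            norm_rothe_sub_step_le hτ hf hgk ht)
    _ = ∫ t in Ioc 0 (N * τ - τ), ‖f (t + τ) - f t‖ := by
        have hshift := setIntegral_Ioc_comp_add_right (fun t => ‖f t - f (t - τ)‖) 0 (N * τ - τ) τ
        simp only [add_sub_cancel_right, zero_add, sub_add_cancel] at hshift
        exact hshift.symm

/-- The Rothe (piecewise linear) interpolation `g` of a piecewise constant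
function `f` satisfies `‖g - f‖_{L^1(0,T;B)} ≤ ‖σ_τ f - f‖_{L^1(0,T-τ;B)}`. -/
theorem stmt9
    {B : Type*} [NormedAddCommGroup B] [NormedSpace ℝ B] [CompleteSpace B]
    (N : ℕ) (hN : 1 ≤ N) (τ T : ℝ) (hτ : 0 < τ) (hT : T = N * τ)
    (u : ℕ → B) (f g : ℝ → B)
    (hf : ∀ k ∈ Finset.Icc 1 N, ∀ t ∈ Ioc ((k - 1 : ℝ) * τ) (k * τ), f t = u k)
    (hg1 : ∀ t ∈ Ioc (0 : ℝ) τ, g t = u 1)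
    (hgk : ∀ k ∈ Finset.Icc 2 N, ∀ t ∈ Ioc ((k - 1 : ℝ) * τ) (k * τ),
      g t = u k - ((k * τ - t) / τ) • (u k - u (k - 1))) :
    ∫ t in Ioc 0 T, ‖g t - f t‖ ≤ ∫ t in Ioc 0 (T - τ), ‖f (t + τ) - f t‖ :=
  stmt9_general N hN τ T hτ hT u f g hf hg1 hgk
end
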